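/- arXiv:1208.1132 — 6 statements merged into one kernel-verified Lean document; each statement's English description precedes it below -/
import Mathlib

section
/- The function P is convex on ℝ, hence 𝒫 is a convex function on ℝ²; 𝒫 is invariant under the dihedral group D₄ generated by the involutions G(x,y) = (y,x) and G′(x,y) = (x,−y), i.e. 𝒫 ∘ G = 𝒫 and 𝒫 ∘ G′ = 𝒫; and for every c > 0 the sublevel set {z ∈ ℝ² : 𝒫(z) ≤ c} is a compact convex subset of ℝ² with nonempty interior whose topological boundary equals the level set {z ∈ ℝ² : 𝒫(z) = c}. -/
open scoped Classical

noncomputable section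

open Set

/-- The scaled round-off map `F_λ` on the plane: `F_λ(z) = λ·F(z/λ)`,
so `F_λ(z) = (λ⌊z₁⌋ − z₂, z₁)`. -/
def Fl (lam : ℝ) (z : ℝ × ℝ) : ℝ × ℝ := (lam * (⌊z.1⌋ : ℝ) - z.2, z.1)

/-- The inverse of `F_λ`. -/
def Flinv (lam : ℝ) (z : ℝ × ℝ) : ℝ × ℝ := (z.2, lam * (⌊z.2⌋ : ℝ) - z.1)

/-- Integer iterate `F_λ^k`, `k ∈ ℤ`. -/
def FlIter (lam : ℝ) (k : ℤ) (z : ℝ × ℝ) : ℝ × ℝ :=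
  if 0 ≤ k then (Fl lam)^[k.toNat] z else (Flinv lam)^[(-k).toNat] z

/-- Membership in the scaled lattice `(λℤ)²`. -/
def IsLatticePt (lam : ℝ) (z : ℝ × ℝ) : Prop := ∃ a b : ℤ, z = (lam * a, lam * b)

/-- The discrete vector field `𝐯(z) = F_λ⁴(z) − z`. -/
def vfield (lam : ℝ) (z : ℝ × ℝ) : ℝ × ℝ := (Fl lam)^[4] z - z

/-- The auxiliary (integrable) vector field `𝐰`. -/
def wfield (lam : ℝ) (z : ℝ × ℝ) : ℝ × ℝ :=
  (lam * (2 * (⌊z.2⌋ : ℝ) + 1), -(lam * (2 * (⌊z.1⌋ : ℝ) + 1)))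

/-- The constant value `𝐰_{m,n}` of `𝐰` on the box `B_{m,n}`. -/
def wmn (lam : ℝ) (m n : ℤ) : ℝ × ℝ :=
  (lam * (2 * (n : ℝ) + 1), -(lam * (2 * (m : ℝ) + 1)))

/-- The piecewise-affine function `P(x) = ⌊x⌋² + (2⌊x⌋+1)(x − ⌊x⌋)`. -/
def Pfun (x : ℝ) : ℝ := (⌊x⌋ : ℝ) ^ 2 + (2 * (⌊x⌋ : ℝ) + 1) * (x - (⌊x⌋ : ℝ))

/-- The Hamiltonian `𝒫(x,y) = P(x) + P(y)`. -/
def Ham (z : ℝ × ℝ) : ℝ := Pfun z.1 + Pfun z.2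

/-- The round Hamiltonian `𝒬(x,y) = x² + y²`. -/
def Qfun (z : ℝ × ℝ) : ℝ := z.1 ^ 2 + z.2 ^ 2

/-- The level set `Π(z)` of `𝒫` through `z`. -/
def levelSet (z : ℝ × ℝ) : Set (ℝ × ℝ) := {w | Ham w = Ham z}

/-- The grid `Δ` of horizontal and vertical integer lines. -/
def DeltaSet : Set (ℝ × ℝ) := {z | (∃ m : ℤ, z.1 = (m : ℝ)) ∨ (∃ n : ℤ, z.2 = (n : ℝ))}

/-- The box `B_{m,n}`. -/
def Bbox (m n : ℤ) : Set (ℝ × ℝ) := {z | ⌊z.1⌋ = m ∧ ⌊z.2⌋ = n}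

/-- The lattice `ℤ² ⊂ ℝ²`. -/
def intLattice : Set (ℝ × ℝ) := {z | ∃ a b : ℤ, z = ((a : ℝ), (b : ℝ))}

/-- `r(c)`: the number of representations of `c` as a sum of two integer squares. -/
def rfun (c : ℝ) : ℕ := Set.ncard {p : ℤ × ℤ | ((p.1 : ℝ)) ^ 2 + ((p.2 : ℝ)) ^ 2 = c}

/-- Euclidean distance from `z` to the symmetry line `y = x`. -/
def dG (z : ℝ × ℝ) : ℝ := |z.1 - z.2| / Real.sqrt 2

/-- The integer round-off `R`. -/
def Rfl (z : ℝ × ℝ) : ℤ × ℤ := (⌊z.1⌋, ⌊z.2⌋)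

/-- The rescaled round-off `R_λ(w) = λ·R(w/λ)`. -/
def Rlam (lam : ℝ) (w : ℝ × ℝ) : ℝ × ℝ :=
  (lam * (⌊w.1 / lam⌋ : ℝ), lam * (⌊w.2 / lam⌋ : ℝ))

/-- The return domain `X`. -/
def Xdom (lam : ℝ) : Set (ℝ × ℝ) :=
  {z | IsLatticePt lam z ∧ 0 ≤ z.1 ∧ 0 ≤ z.2 ∧
    dG z ≤ dG ((Fl lam)^[4] z) ∧ dG z < dG ((Flinv lam)^[4] z)}

/-- Forward transit time `τ` to `X`. -/
def tau (lam : ℝ) (z : ℝ × ℝ) : ℕ := sInf {k : ℕ | 1 ≤ k ∧ (Fl lam)^[k] z ∈ Xdom lam}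

/-- Backward transit time `τ₋` to `X`. -/
def tauMinus (lam : ℝ) (z : ℝ × ℝ) : ℕ := sInf {k : ℕ | (Flinv lam)^[k] z ∈ Xdom lam}

/-- The return orbit `O_τ(z)`. -/
def returnOrbit (lam : ℝ) (z : ℝ × ℝ) : Set (ℝ × ℝ) :=
  {w | ∃ k : ℤ, -(tauMinus lam z : ℤ) ≤ k ∧ k ≤ (tau lam z : ℤ) ∧ w = FlIter lam k z}

/-- The first-return map `Φ`. -/
def Phi (lam : ℝ) (z : ℝ × ℝ) : ℝ × ℝ := (Fl lam)^[tau lam z] z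

/-- The full orbit `O(z) = {F_λ^t(z) : t ∈ ℤ}`. -/
def fullOrbit (lam : ℝ) (z : ℝ × ℝ) : Set (ℝ × ℝ) := {w | ∃ t : ℤ, w = FlIter lam t z}

/-- The set `Λ` of transition points. -/
def TransSet (lam : ℝ) : Set (ℝ × ℝ) :=
  {z | IsLatticePt lam z ∧ Rfl ((Fl lam)^[4] z) ≠ Rfl z}

/-- The set `Σ = ⋃ Σ_{m,n}`. -/
def SigmaSet (lam : ℝ) : Set (ℝ × ℝ) :=
  {z | z ∈ TransSet lam ∧ ∃ m n : ℤ,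
    max |z.1 - (m : ℝ)| |z.2 - (n : ℝ)| ≤
      lam * (max |2 * (m : ℝ) + 1| |2 * (n : ℝ) + 1| + 2)}

/-- `ℰ`: the natural numbers which are sums of two integer squares. -/
def Eset : Set ℕ := {n | ∃ a b : ℤ, (n : ℤ) = a ^ 2 + b ^ 2}

/-- The successor of `e` in `ℰ`. -/
def nextE (e : ℕ) : ℕ := sInf {f | f ∈ Eset ∧ e < f}

/-- The critical interval `I^e = (e, e′)`. -/
def Icrit (e : ℕ) : Set ℝ := Set.Ioo (e : ℝ) (nextE e : ℝ)

/-- The set `X^e`. -/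
def Xe (lam : ℝ) (e : ℕ) : Set (ℝ × ℝ) :=
  {z | z ∈ Xdom lam ∧ ∀ w ∈ returnOrbit lam z, Ham w ∈ Icrit e}

/-- A point of `X^e` is regular if it is not a transition point and its return
orbit avoids `Σ`. -/
def IsRegularPt (lam : ℝ) (e : ℕ) (z : ℝ × ℝ) : Prop :=
  z ∈ Xe lam e ∧ z ∉ TransSet lam ∧ returnOrbit lam z ∩ SigmaSet lam = ∅

/-- `J` is a maximal subinterval `Ĩ^e(λ)` of `I^e` on which all points of `X^e`
are regular. -/
def IsMaxRegInterval (lam : ℝ) (e : ℕ) (J : Set ℝ) : Prop :=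
  J ⊆ Icrit e ∧ J.OrdConnected ∧
    (∀ z ∈ Xe lam e, Ham z ∈ J → IsRegularPt lam e z) ∧
    ∀ J' : Set ℝ, J ⊆ J' → J' ⊆ Icrit e → J'.OrdConnected →
      (∀ z ∈ Xe lam e, Ham z ∈ J' → IsRegularPt lam e z) → J' = J

/-- The regular domain `X̃^e` determined by the interval `J = Ĩ^e(λ)`. -/
def Xtilde (lam : ℝ) (e : ℕ) (J : Set ℝ) : Set (ℝ × ℝ) :=
  {z | z ∈ Xe lam e ∧ Ham z ∈ J}

/-- The type of a vertex: the floor of the absolute value of its non-integer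
coordinate. -/
def vtype (z : ℝ × ℝ) : ℕ :=
  if ∃ m : ℤ, z.1 = (m : ℝ) then (⌊|z.2|⌋).toNat else (⌊|z.1|⌋).toNat

/-- `v` (1-indexed, entries `v 1, …, v k` with `k = ⌊√e⌋+1`) is the vertex list
of the polygon class of `e`, and `o j` records whether the `j`-th vertex lies on
a horizontal lattice line (i.e. has integer `y`-coordinate): for every value
`a ∈ I^e`, the vertices of the level polygon `{𝒫 = a}` lying in the first octant,
enumerated clockwise (i.e. by increasing `x`-coordinate), have types
`v 1, …, v k`. -/
def IsVertexList (e : ℕ) (v : ℕ → ℕ) (o : ℕ → Bool) : Prop :=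
  ∀ a ∈ Icrit e, ∃ p : ℕ → ℝ × ℝ,
    (∀ j, 1 ≤ j → j ≤ Nat.sqrt e + 1 →
      Ham (p j) = a ∧ p j ∈ DeltaSet ∧ 0 ≤ (p j).2 ∧ (p j).2 ≤ (p j).1 ∧
        vtype (p j) = v j ∧ (o j = true ↔ ∃ n : ℤ, (p j).2 = (n : ℝ))) ∧
    (∀ i j, 1 ≤ i → i < j → j ≤ Nat.sqrt e + 1 → (p i).1 < (p j).1) ∧
    (∀ w : ℝ × ℝ, Ham w = a → w ∈ DeltaSet → 0 ≤ w.2 → w.2 ≤ w.1 →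
      ∃ j, 1 ≤ j ∧ j ≤ Nat.sqrt e + 1 ∧ w = p j)

/-- The extended vertex list: `v_j = v_{2k−j}` for `k < j ≤ 2k−1`. -/
def vext (e : ℕ) (v : ℕ → ℕ) (j : ℕ) : ℕ :=
  if j ≤ Nat.sqrt e + 1 then v j else v (2 * (Nat.sqrt e + 1) - j)

/-- The extended orientation list. -/
def oext (e : ℕ) (o : ℕ → Bool) (j : ℕ) : Bool :=
  if j ≤ Nat.sqrt e + 1 then o j else o (2 * (Nat.sqrt e + 1) - j)

/-- The recursively defined integers `q_j` (here `v` is the extended vertex list):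
`q₁ = (2v₁+1)²`, `q_j = q_{j−1}` if `v_j = v_{j−1}`, and
`q_j = lcm((2v_j+1)(2v_{j−1}+1), q_{j−1})` otherwise. -/
def qseq (v : ℕ → ℕ) : ℕ → ℕ
  | 0 => (2 * v 1 + 1) ^ 2
  | 1 => (2 * v 1 + 1) ^ 2
  | j + 2 =>
    if v (j + 2) = v (j + 1) then qseq v (j + 1)
    else Nat.lcm ((2 * v (j + 2) + 1) * (2 * v (j + 1) + 1)) (qseq v (j + 1))

/-- `p_j = q_j/(2v_j+1)`. -/
def pseq (v : ℕ → ℕ) (j : ℕ) : ℕ := qseq v j / (2 * v j + 1)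

/-- `q = q_{2k−1}`. -/
def qval (e : ℕ) (v : ℕ → ℕ) : ℕ := qseq (vext e v) (2 * (Nat.sqrt e + 1) - 1)

/-- The vector `L_j = (λ q_j/(2v₁+1))·(1,1)`. -/
def Lvec (lam : ℝ) (v1 : ℕ) (qj : ℕ) : ℝ × ℝ :=
  (lam * (qj : ℝ) / (2 * (v1 : ℝ) + 1), lam * (qj : ℝ) / (2 * (v1 : ℝ) + 1))

/-- The lattice `𝕃 = ℤ·L_j + ℤ·((L_j − 𝐰_{v₁,v₁})/2)` as an additive subgroup
of `ℝ²`. -/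
def latticeL (lam : ℝ) (v1 : ℕ) (qj : ℕ) : AddSubgroup (ℝ × ℝ) :=
  AddSubgroup.closure
    {Lvec lam v1 qj, (2⁻¹ : ℝ) • (Lvec lam v1 qj - wmn lam (v1 : ℤ) (v1 : ℤ))}

/-- Forward transit time of `F_λ⁴` to `Λ`. -/
def tTrans (lam : ℝ) (z : ℝ × ℝ) : ℕ :=
  sInf {i : ℕ | 1 ≤ i ∧ (Fl lam)^[4 * i] z ∈ TransSet lam}

/-- The strip map `Ψ(z) = F_λ^{4t(z)}(z)`. -/
def Psi (lam : ℝ) (z : ℝ × ℝ) : ℝ × ℝ := (Fl lam)^[4 * tTrans lam z] z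

/-- Backward transit time of `F_λ⁻⁴` to `Λ`. -/
def sTrans (lam : ℝ) (z : ℝ × ℝ) : ℕ :=
  sInf {i : ℕ | 1 ≤ i ∧ (Flinv lam)^[4 * i] z ∈ TransSet lam}

/-- The inverse strip map `Ψ⁻¹`. -/
def PsiInv (lam : ℝ) (z : ℝ × ℝ) : ℝ × ℝ := (Flinv lam)^[4 * sTrans lam z] z

/-- `Ψ^j` for `j ∈ {−1} ∪ ℕ`. -/
def PsiPow (lam : ℝ) (j : ℤ) (z : ℝ × ℝ) : ℝ × ℝ :=
  if j < 0 then PsiInv lam z else (Psi lam)^[j.toNat] z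

/-- The coordinate unit vector in the non-integer direction of a vertex lying
on a horizontal (`horiz = true`) resp. vertical lattice line. -/
def evec (horiz : Bool) : ℝ × ℝ := if horiz then (1, 0) else (0, 1)

/-- `s ∈ {0, …, 2v_j}` is the code entry at a vertex point `w` of type `vj`: if
the vertex lies on a horizontal line `y = n` then, writing
`w = λ(⌈v_j/λ⌉ + x_j, ⌈n/λ⌉ + y_j)` with `|y_j| < 2v_j+1`, `s ≡ y_j (mod 2v_j+1)`;
analogously in the vertical case. -/
def CodeAt (lam : ℝ) (vj : ℕ) (horiz : Bool) (w : ℝ × ℝ) (s : ℤ) : Prop :=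
  0 ≤ s ∧ s < 2 * (vj : ℤ) + 1 ∧
    (if horiz then
        ∃ n Y yj : ℤ, w.2 = lam * (Y : ℝ) ∧ Y = ⌈(n : ℝ) / lam⌉ + yj ∧
          |yj| < 2 * (vj : ℤ) + 1 ∧ s ≡ yj [ZMOD (2 * (vj : ℤ) + 1)]
      else
        ∃ m X xj : ℤ, w.1 = lam * (X : ℝ) ∧ X = ⌈(m : ℝ) / lam⌉ + xj ∧
          |xj| < 2 * (vj : ℤ) + 1 ∧ s ≡ xj [ZMOD (2 * (vj : ℤ) + 1)])

/-- `σ` is the orbit code `(σ₋₁, σ₁, …, σ_{2k−1})` of `z`. -/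
def IsOrbitCode (lam : ℝ) (e : ℕ) (v : ℕ → ℕ) (o : ℕ → Bool) (z : ℝ × ℝ)
    (σ : ℤ → ℤ) : Prop :=
  CodeAt lam (v 1) (!(o 1)) (PsiInv lam z) (σ (-1)) ∧
    ∀ j : ℕ, 1 ≤ j → j ≤ 2 * (Nat.sqrt e + 1) - 1 →
      CodeAt lam (vext e v j) (oext e o j) ((Psi lam)^[j] z) (σ (j : ℤ))

/-- The Euclidean norm on `ℝ²`. -/
def enorm2 (z : ℝ × ℝ) : ℝ := Real.sqrt (z.1 ^ 2 + z.2 ^ 2)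

/-- The rotation number `ν(λ) = arccos(λ/2)/(2π)`. -/
def nuRot (lam : ℝ) : ℝ := Real.arccos (lam / 2) / (2 * Real.pi)

/-- Distance from a real number to the nearest integer. -/
def distInt (x : ℝ) : ℝ := |x - (round x : ℝ)|

/-- The first-order recurrence time `t*(λ)`. -/
def tstar (lam : ℝ) : ℕ :=
  sInf {k : ℕ | 1 ≤ k ∧ distInt ((k : ℝ) * nuRot lam) < distInt (4 * nuRot lam)}

/-- The square `A(r,λ)` of lattice points. -/
def Aset (r lam : ℝ) : Set (ℝ × ℝ) := {z | IsLatticePt lam z ∧ max |z.1| |z.2| < r}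

end

/-! On `[n, n + 1]` the function `P` is the secant of `x ↦ x²` through `n` and `n + 1`, and every
such secant lies below `P`; so `P` is a pointwise maximum of affine functions, hence convex.
Since `P x = x² + {x}(1 - {x}) ≥ x²`, the sublevel sets of `𝒫` are bounded. A point with
`𝒫 z = c` is not interior to `{𝒫 ≤ c}`: by convexity `𝒫` exceeds `c` on the ray from `0`
beyond `z`. -/

open Set Topology

theorem convexOn_univ_of_forall_exists_affine_le {𝕜 E β : Type*} [Field 𝕜] [LinearOrder 𝕜]
    [IsStrictOrderedRing 𝕜] [AddCommGroup E] [Module 𝕜 E] [AddCommGroup β] [PartialOrder β]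
    [IsOrderedAddMonoid β] [Module 𝕜 β] [PosSMulMono 𝕜 β] {f : E → β}
    (h : ∀ x, ∃ g : E →ᵃ[𝕜] β, (∀ y, g y ≤ f y) ∧ g x = f x) : ConvexOn 𝕜 univ f := by
  refine ⟨convex_univ, fun x _ y _ a b ha hb hab => ?_⟩
  obtain ⟨g, hgf, hg⟩ := h (a • x + b • y)
  calc f (a • x + b • y) = a • g x + b • g y := by rw [← hg, Convex.combo_affine_apply hab]
    _ ≤ a • f x + b • f y := by gcongr <;> exact hgf _

open AffineMap in
theorem ConvexOn.lt_lineMap_of_lt {𝕜 E β : Type*} [Field 𝕜] [LinearOrder 𝕜]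
    [IsStrictOrderedRing 𝕜] [AddCommGroup E] [Module 𝕜 E] [AddCommMonoid β] [LinearOrder β]
    [IsOrderedCancelAddMonoid β] [Module 𝕜 β] [PosSMulStrictMono 𝕜 β] {f : E → β}
    (hf : ConvexOn 𝕜 univ f) {x y : E} (hxy : f x < f y) {t : 𝕜} (ht : 1 < t) :
    f y < f (lineMap x y t) := by
  have hy : y ∈ openSegment 𝕜 x (lineMap x y t) := by
    have h := image_openSegment 𝕜 (lineMap x y : 𝕜 →ᵃ[𝕜] E) 0 t
    rw [lineMap_apply_zero] at h
    exact h ▸ ⟨1, Ioo_subset_openSegment ⟨zero_lt_one, ht⟩, lineMap_apply_one x y⟩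
  exact hf.lt_right_of_left_lt (mem_univ _) (mem_univ _) hy hxy

theorem ConvexOn.frontier_setOf_le {E : Type*} [AddCommGroup E] [Module ℝ E] [TopologicalSpace E]
    [IsTopologicalAddGroup E] [ContinuousSMul ℝ E] {f : E → ℝ} (hf : ConvexOn ℝ univ f)
    (hfc : Continuous f) {x₀ : E} {c : ℝ} (hx₀ : f x₀ < c) :
    frontier {z | f z ≤ c} = {z | f z = c} := by
  refine (frontier_le_subset_eq hfc continuous_const).antisymm fun z (hz : f z = c) => ?_
  rw [frontier_eq_closure_inter_closure, (isClosed_le hfc continuous_const).closure_eq]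
  refine ⟨hz.le, ?_⟩
  have hlim : Filter.Tendsto (AffineMap.lineMap x₀ z) (𝓝[>] (1 : ℝ)) (𝓝 z) := by
    simpa using (AffineMap.lineMap_continuous (p := x₀) (q := z)).tendsto (1 : ℝ)
      |>.mono_left nhdsWithin_le_nhds
  refine mem_closure_of_tendsto hlim (eventually_nhdsWithin_of_forall fun t ht => ?_)
  exact not_le.2 (hz ▸ hf.lt_lineMap_of_lt (hz ▸ hx₀) ht)

/-- The secant of `x ↦ x²` through the points `n` and `n + 1`. -/
def intSecant (n : ℤ) : ℝ →ᵃ[ℝ] ℝ where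
  toFun x := (2 * n + 1) * x - n * (n + 1)
  linear := (2 * n + 1 : ℝ) • LinearMap.id
  map_vadd' p v := by
    simp only [vadd_eq_add, LinearMap.smul_apply, LinearMap.id_apply, smul_eq_mul]
    ring

theorem intSecant_apply (n : ℤ) (x : ℝ) : intSecant n x = (2 * n + 1) * x - n * (n + 1) := rfl

theorem intSecant_floor (x : ℝ) : intSecant ⌊x⌋ x = Pfun x := by
  rw [intSecant_apply, Pfun]; ring

theorem intSecant_le_Pfun (n : ℤ) (x : ℝ) : intSecant n x ≤ Pfun x := by
  have hx : (⌊x⌋ : ℝ) ≤ x := Int.floor_le x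
  have hx' : x < ⌊x⌋ + 1 := Int.lt_floor_add_one x
  have hdiff : Pfun x - intSecant n x = (⌊x⌋ - n) * (2 * x - ⌊x⌋ - n - 1) := by
    rw [← intSecant_floor, intSecant_apply, intSecant_apply]; ring
  suffices 0 ≤ ((⌊x⌋ : ℝ) - n) * (2 * x - ⌊x⌋ - n - 1) by linarith
  rcases lt_trichotomy n ⌊x⌋ with h | rfl | h
  · have h : (n : ℝ) + 1 ≤ ⌊x⌋ := by exact_mod_cast h
    exact mul_nonneg (by linarith) (by linarith)
  · simp
  · have h : (⌊x⌋ : ℝ) + 1 ≤ n := by exact_mod_cast h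
    exact mul_nonneg_of_nonpos_of_nonpos (by linarith) (by linarith)

theorem Pfun_convexOn : ConvexOn ℝ univ Pfun :=
  convexOn_univ_of_forall_exists_affine_le fun x =>
    ⟨intSecant ⌊x⌋, intSecant_le_Pfun _, intSecant_floor x⟩

theorem Ham_convexOn : ConvexOn ℝ univ Ham := by
  have := (Pfun_convexOn.comp_linearMap (LinearMap.fst ℝ ℝ ℝ)).add
    (Pfun_convexOn.comp_linearMap (LinearMap.snd ℝ ℝ ℝ))
  rw [preimage_univ] at this
  exact this

theorem Ham_continuous : Continuous Ham :=
  continuousOn_univ.1 (Ham_convexOn.continuousOn isOpen_univ)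

theorem Pfun_eq_sq_add_fract (x : ℝ) : Pfun x = x ^ 2 + Int.fract x * (1 - Int.fract x) := by
  rw [Pfun, ← Int.self_sub_fract]; ring

theorem Pfun_neg (x : ℝ) : Pfun (-x) = Pfun x := by
  rw [Pfun_eq_sq_add_fract, Pfun_eq_sq_add_fract]
  by_cases h : Int.fract x = 0
  · rw [Int.fract_neg_eq_zero.2 h, h]; ring
  · rw [Int.fract_neg h]; ring

theorem sq_le_Pfun (x : ℝ) : x ^ 2 ≤ Pfun x := by
  rw [Pfun_eq_sq_add_fract]
  nlinarith [Int.fract_nonneg x, Int.fract_lt_one x]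

theorem Qfun_le_Ham (z : ℝ × ℝ) : Qfun z ≤ Ham z :=
  add_le_add (sq_le_Pfun z.1) (sq_le_Pfun z.2)

theorem isCompact_setOf_Ham_le (c : ℝ) : IsCompact {z : ℝ × ℝ | Ham z ≤ c} := by
  refine Metric.isCompact_of_isClosed_isBounded (isClosed_le Ham_continuous continuous_const) ?_
  refine isBounded_iff_forall_norm_le.2 ⟨√c, fun z (hz : Ham z ≤ c) => ?_⟩
  have hQ : z.1 ^ 2 + z.2 ^ 2 ≤ c := (Qfun_le_Ham z).trans hz
  exact max_le (Real.abs_le_sqrt (by nlinarith [sq_nonneg z.2]))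
    (Real.abs_le_sqrt (by nlinarith [sq_nonneg z.1]))

/-- Convexity and symmetry of the Hamiltonian `𝒫`, and structure of its
sublevel sets. -/
theorem Ham_convex_symmetric_sublevels :
    ConvexOn ℝ Set.univ Pfun ∧ ConvexOn ℝ Set.univ Ham ∧
    (∀ x y : ℝ, Ham (y, x) = Ham (x, y)) ∧
    (∀ x y : ℝ, Ham (x, -y) = Ham (x, y)) ∧
    ∀ c : ℝ, 0 < c →
      IsCompact {z : ℝ × ℝ | Ham z ≤ c} ∧
      Convex ℝ {z : ℝ × ℝ | Ham z ≤ c} ∧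
      (interior {z : ℝ × ℝ | Ham z ≤ c}).Nonempty ∧
      frontier {z : ℝ × ℝ | Ham z ≤ c} = {z : ℝ × ℝ | Ham z = c} := by
  refine ⟨Pfun_convexOn, Ham_convexOn, fun x y => add_comm _ _,
    fun x y => congrArg (Pfun x + ·) (Pfun_neg y), fun c hc => ?_⟩
  have h0 : Ham 0 < c := by simpa [Ham, Pfun] using hc
  have hlt : {z : ℝ × ℝ | Ham z < c} ⊆ interior {z | Ham z ≤ c} :=
    (isOpen_lt Ham_continuous continuous_const).subset_interior_iff.2
      fun z (h : Ham z < c) => h.le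
  exact ⟨isCompact_setOf_Ham_le c, by simpa using Ham_convexOn.convex_le c, ⟨0, hlt h0⟩,
    Ham_convexOn.frontier_setOf_le Ham_continuous h0⟩
end

section
/- For every z ∈ ℝ², the set Π(z) ∩ ℤ² has exactly r(𝒫(z)) elements; in particular, the level set Π(z) contains a lattice point if and only if 𝒫(z) ∈ ℰ. Moreover, if 𝒫(z) > 0 and 𝒫(z) ∉ ℰ, then Π(z) ∩ Δ is a finite set with exactly 4·(2⌊√𝒫(z)⌋ + 1) elements (these are the vertices of the non-critical polygon Π(z)). -/
open scoped Classical

/-! On the line `x = m` the level set `{𝒫 = c}` is `{(m, y) : P(y) = c - m²}`, and `P` is an even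
function mapping `[0, ∞)` increasingly onto itself, so it meets the line in the two points
`(m, ±P⁻¹(c - m²))` when `m² < c` and not at all when `m² > c`. If `c ∉ ℰ` then `m² ≠ c`, the
lines `x = m` that are hit are those with `|m| ≤ ⌊√c⌋`, and no vertex lies on two grid lines;
with the symmetry `(x, y) ↦ (y, x)` this gives `2 · 2 · (2⌊√c⌋ + 1)` vertices. At integer points
`𝒫` agrees with `x² + y²`, which gives the count of lattice points. -/

noncomputable section

open Set

namespace Pfun

theorem intCast (a : ℤ) : Pfun a = (a : ℝ) ^ 2 := by
  simp [Pfun]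

theorem zero : Pfun 0 = 0 := by
  simpa using intCast 0

theorem neg (x : ℝ) : Pfun (-x) = Pfun x := by
  by_cases hx : ∃ a : ℤ, x = a
  · obtain ⟨a, rfl⟩ := hx
    rw [← Int.cast_neg, intCast, intCast, Int.cast_neg, neg_sq]
  · have hlt : (⌊x⌋ : ℝ) < x :=
      (Int.floor_le x).lt_of_ne fun h => hx ⟨⌊x⌋, h.symm⟩
    have hfloor : ⌊-x⌋ = -⌊x⌋ - 1 := by
      rw [Int.floor_eq_iff]
      push_cast
      constructor <;> linarith [Int.lt_floor_add_one x]
    simp only [Pfun, hfloor]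
    push_cast
    ring

theorem abs (x : ℝ) : Pfun |x| = Pfun x := by
  rcases abs_choice x with h | h <;> rw [h]
  exact neg x

theorem strictMonoOn : StrictMonoOn Pfun (Ici 0) := by
  intro x hx y _ hxy
  have hx0 : (0 : ℝ) ≤ ⌊x⌋ := by exact_mod_cast Int.floor_nonneg.2 hx
  have hfloor : ⌊x⌋ ≤ ⌊y⌋ := Int.floor_le_floor hxy.le
  have := Int.floor_le x
  have := Int.lt_floor_add_one x
  have := Int.floor_le y
  have := Int.lt_floor_add_one y
  rcases hfloor.eq_or_lt with h | h
  · simp only [Pfun, ← h]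
    nlinarith
  · have h' : (⌊x⌋ : ℝ) + 1 ≤ ⌊y⌋ := by exact_mod_cast h
    simp only [Pfun]
    nlinarith

theorem nonneg (x : ℝ) : 0 ≤ Pfun x := by
  rw [← abs]
  simpa [zero] using strictMonoOn.monotoneOn self_mem_Ici (abs_nonneg x) (abs_nonneg x)

end Pfun

/-- The inverse of `P` on `[0, ∞)`: on `[n, n + 1]` the function `P` is affine with slope `2n + 1`
and `P(n) = n²`. -/
def Pinv (d : ℝ) : ℝ :=
  ⌊√d⌋ + (d - ⌊√d⌋ ^ 2) / (2 * ⌊√d⌋ + 1)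

theorem floor_Pinv {d : ℝ} (hd : 0 ≤ d) : ⌊Pinv d⌋ = ⌊√d⌋ := by
  set n := ⌊√d⌋
  have hn : (0 : ℝ) ≤ n := by exact_mod_cast Int.floor_nonneg.2 (Real.sqrt_nonneg d)
  have hlo : (n : ℝ) ^ 2 ≤ d := by
    nlinarith [Int.floor_le √d, Real.sq_sqrt hd]
  have hhi : d < (n + 1) ^ 2 := by
    nlinarith [Int.lt_floor_add_one √d, Real.sq_sqrt hd, Real.sqrt_nonneg d]
  have hpos : (0 : ℝ) < 2 * n + 1 := by linarith
  rw [Pinv, Int.floor_eq_iff]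
  constructor
  · linarith [div_nonneg (sub_nonneg.2 hlo) hpos.le]
  · have : (d - n ^ 2) / (2 * n + 1) < 1 := by
      rw [div_lt_one hpos]
      nlinarith
    linarith

theorem Pinv_nonneg {d : ℝ} (hd : 0 ≤ d) : 0 ≤ Pinv d := by
  have := Int.floor_le (Pinv d)
  have : (0 : ℝ) ≤ ⌊Pinv d⌋ := by
    exact_mod_cast floor_Pinv hd ▸ Int.floor_nonneg.2 (Real.sqrt_nonneg d)
  linarith

theorem Pfun_Pinv {d : ℝ} (hd : 0 ≤ d) : Pfun (Pinv d) = d := by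
  have hpos : (0 : ℝ) < 2 * ⌊√d⌋ + 1 := by
    have : (0 : ℝ) ≤ ⌊√d⌋ := by exact_mod_cast Int.floor_nonneg.2 (Real.sqrt_nonneg d)
    linarith
  rw [Pfun, floor_Pinv hd, Pinv]
  field_simp
  ring

theorem Pinv_pos {d : ℝ} (hd : 0 < d) : 0 < Pinv d := by
  refine (Pinv_nonneg hd.le).lt_of_ne fun h => hd.ne ?_
  rw [← Pfun_Pinv hd.le, ← h, Pfun.zero]

theorem Pfun_eq_iff {d y : ℝ} (hd : 0 ≤ d) : Pfun y = d ↔ y = Pinv d ∨ y = -Pinv d := by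
  rw [← abs_eq (Pinv_nonneg hd), ← Pfun.abs]
  refine ⟨fun h => ?_, fun h => by rw [h, Pfun_Pinv hd]⟩
  exact Pfun.strictMonoOn.injOn (abs_nonneg y) (Pinv_nonneg hd) (h.trans (Pfun_Pinv hd).symm)

theorem Ham_intCast (a b : ℤ) : Ham ((a : ℝ), (b : ℝ)) = (a : ℝ) ^ 2 + (b : ℝ) ^ 2 := by
  simp [Ham, Pfun.intCast]

theorem Ham_swap (w : ℝ × ℝ) : Ham w.swap = Ham w :=
  add_comm _ _

theorem exists_mem_Eset_eq_iff (c : ℝ) :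
    (∃ e ∈ Eset, c = e) ↔ ∃ a b : ℤ, (a : ℝ) ^ 2 + (b : ℝ) ^ 2 = c := by
  constructor
  · rintro ⟨e, ⟨a, b, he⟩, rfl⟩
    exact ⟨a, b, by exact_mod_cast he.symm⟩
  · rintro ⟨a, b, rfl⟩
    refine ⟨(a ^ 2 + b ^ 2).toNat, ⟨a, b, Int.toNat_of_nonneg (by positivity)⟩, ?_⟩
    exact_mod_cast (Int.toNat_of_nonneg (by positivity : 0 ≤ a ^ 2 + b ^ 2)).symm

theorem levelSet_inter_intLattice (z : ℝ × ℝ) :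
    levelSet z ∩ intLattice =
      Prod.map (Int.cast : ℤ → ℝ) Int.cast '' {p | (p.1 : ℝ) ^ 2 + (p.2 : ℝ) ^ 2 = Ham z} := by
  ext w
  constructor
  · rintro ⟨hw, a, b, rfl⟩
    exact ⟨(a, b), (Ham_intCast a b).symm.trans hw, rfl⟩
  · rintro ⟨⟨a, b⟩, hab, rfl⟩
    exact ⟨(Ham_intCast a b).trans hab, a, b, rfl⟩

def verticalVertices (c : ℝ) : Set (ℝ × ℝ) := {w | Ham w = c ∧ ∃ m : ℤ, w.1 = m}

section NotSumTwoSq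

variable {c : ℝ} (hcE : ∀ a b : ℤ, (a : ℝ) ^ 2 + (b : ℝ) ^ 2 ≠ c)
include hcE

theorem disjoint_verticalVertices_swap :
    Disjoint (verticalVertices c) (Prod.swap '' verticalVertices c) := by
  rw [disjoint_left]
  rintro ⟨x, y⟩ ⟨hxy, m, rfl⟩ ⟨⟨y', x'⟩, ⟨-, n, hn⟩, h⟩
  simp only [Prod.swap_prod_mk, Prod.mk.injEq] at h hn
  obtain ⟨rfl, rfl⟩ := h
  rw [hn, Ham_intCast] at hxy
  exact hcE m n hxy

variable (hc : 0 < c)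
include hc

theorem sq_lt_iff_mem_Icc (m : ℤ) : (m : ℝ) ^ 2 < c ↔ m ∈ Finset.Icc (-⌊√c⌋) ⌊√c⌋ := by
  rw [Finset.mem_Icc, neg_le, Int.le_floor, Int.le_floor, Int.cast_neg, neg_le, ← abs_le,
    ← Real.sqrt_sq_eq_abs, Real.sqrt_le_sqrt_iff hc.le, le_iff_lt_or_eq, or_iff_left]
  simpa using hcE m 0

theorem verticalVertices_eq :
    verticalVertices c = (fun p : ℤ × ℝ => ((p.1 : ℝ), p.2 * Pinv (c - (p.1 : ℝ) ^ 2))) ''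
      ↑(Finset.Icc (-⌊√c⌋) ⌊√c⌋ ×ˢ ({1, -1} : Finset ℝ)) := by
  ext ⟨x, y⟩
  simp only [verticalVertices, Ham, mem_ofPred_eq, mem_image, Finset.coe_product, mem_prod,
    Finset.mem_coe, Finset.mem_insert, Finset.mem_singleton, Prod.exists, Prod.mk.injEq]
  constructor
  · rintro ⟨hxy, m, rfl⟩
    rw [Pfun.intCast, ← eq_sub_iff_add_eq'] at hxy
    have hm : (m : ℝ) ^ 2 < c := by
      refine lt_of_le_of_ne (by linarith [Pfun.nonneg y]) fun h => hcE m 0 ?_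
      simpa using h
    rcases (Pfun_eq_iff (by linarith)).1 hxy with rfl | rfl
    · exact ⟨m, 1, ⟨(sq_lt_iff_mem_Icc hcE hc m).1 hm, Or.inl rfl⟩, rfl, one_mul _⟩
    · exact ⟨m, -1, ⟨(sq_lt_iff_mem_Icc hcE hc m).1 hm, Or.inr rfl⟩, rfl, neg_one_mul _⟩
  · rintro ⟨m, s, ⟨hm, hs⟩, rfl, rfl⟩
    have hm' := (sq_lt_iff_mem_Icc hcE hc m).2 hm
    refine ⟨?_, m, rfl⟩
    rw [Pfun.intCast, ← eq_sub_iff_add_eq', Pfun_eq_iff (by linarith)]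
    rcases hs with rfl | rfl
    · exact Or.inl (one_mul _)
    · exact Or.inr (neg_one_mul _)

theorem verticalVertices_finite : (verticalVertices c).Finite := by
  rw [verticalVertices_eq hcE hc]
  exact Finset.finite_toSet _ |>.image _

theorem ncard_verticalVertices : ((verticalVertices c).ncard : ℤ) = 2 * (2 * ⌊√c⌋ + 1) := by
  have hK : 0 ≤ ⌊√c⌋ := Int.floor_nonneg.2 (Real.sqrt_nonneg c)
  rw [verticalVertices_eq hcE hc, InjOn.ncard_image, ncard_coe_finset, Finset.card_product,
    Int.card_Icc, Finset.card_pair (by norm_num), Nat.cast_mul, Int.toNat_of_nonneg (by omega)]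
  · ring
  rintro ⟨m, s⟩ hm ⟨m', s'⟩ - h
  rw [Finset.mem_coe, Finset.mem_product] at hm
  simp only [Prod.mk.injEq, Int.cast_inj] at h ⊢
  obtain ⟨rfl, h⟩ := h
  have := Pinv_pos (sub_pos.2 ((sq_lt_iff_mem_Icc hcE hc m).2 hm.1))
  exact ⟨rfl, mul_right_cancel₀ this.ne' h⟩

end NotSumTwoSq

theorem levelSet_inter_DeltaSet (z : ℝ × ℝ) :
    levelSet z ∩ DeltaSet = verticalVertices (Ham z) ∪ Prod.swap '' verticalVertices (Ham z) := by
  ext w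
  simp only [image_swap_eq_preimage_swap, verticalVertices, levelSet, DeltaSet, Ham_swap,
    mem_inter_iff, mem_union, mem_preimage, mem_ofPred_eq, Prod.fst_swap, and_or_left]

end

/-- Lattice points on level sets of `𝒫`, and the number of vertices of a
non-critical polygon. -/
theorem levelSet_lattice_points_and_vertices :
    ∀ z : ℝ × ℝ,
      Set.ncard (levelSet z ∩ intLattice) = rfun (Ham z) ∧
      ((levelSet z ∩ intLattice).Nonempty ↔ ∃ e ∈ Eset, Ham z = (e : ℝ)) ∧
      (0 < Ham z → (∀ e ∈ Eset, Ham z ≠ (e : ℝ)) →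
        (levelSet z ∩ DeltaSet).Finite ∧
        (Set.ncard (levelSet z ∩ DeltaSet) : ℤ) =
          4 * (2 * ⌊Real.sqrt (Ham z)⌋ + 1)) := by
  intro z
  have hinj : Function.Injective (Prod.map (Int.cast : ℤ → ℝ) (Int.cast : ℤ → ℝ)) :=
    Prod.map_injective.2 ⟨Int.cast_injective, Int.cast_injective⟩
  refine ⟨?_, ?_, fun hc hE => ?_⟩
  · rw [levelSet_inter_intLattice, hinj.injOn.ncard_image, rfun]
  · rw [levelSet_inter_intLattice, Set.image_nonempty, exists_mem_Eset_eq_iff]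
    exact ⟨fun ⟨⟨a, b⟩, h⟩ => ⟨a, b, h⟩, fun ⟨a, b, h⟩ => ⟨(a, b), h⟩⟩
  have hcE : ∀ a b : ℤ, (a : ℝ) ^ 2 + (b : ℝ) ^ 2 ≠ Ham z := fun a b h => by
    obtain ⟨e, he, h⟩ := (exists_mem_Eset_eq_iff _).2 ⟨a, b, h⟩
    exact hE e he h
  have hfin := verticalVertices_finite hcE hc
  rw [levelSet_inter_DeltaSet]
  refine ⟨hfin.union (hfin.image _), ?_⟩
  rw [Set.ncard_union_eq (disjoint_verticalVertices_swap hcE) hfin (hfin.image _),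
    Prod.swap_injective.injOn.ncard_image, Nat.cast_add, ncard_verticalVertices hcE hc]
  ring
end

section
/- For every (x,y) ∈ ℝ²: 0 ≤ 𝒫(x,y) − (x² + y²) ≤ 1/2, with equality 𝒫(x,y) = x² + y² if and only if x ∈ ℤ and y ∈ ℤ. Consequently, for integers e and f, the level set {z ∈ ℝ² : 𝒫(z) = e} and the circle {z ∈ ℝ² : 𝒬(z) = f} intersect only if e = f, in which case their intersection equals {(m,n) ∈ ℤ² : m² + n² = e} (of cardinality r(e)); in particular every point z with 𝒫(z) = e satisfies 𝒬(z) ≤ e, so each critical polygon lies inside the critical circle of the same value. -/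
open scoped Classical

lemma Pfun_sub_sq (x : ℝ) : Pfun x - x ^ 2 = Int.fract x * (1 - Int.fract x) := by
  unfold Pfun Int.fract
  ring

lemma Pfun_sub_nonneg (x : ℝ) : 0 ≤ Pfun x - x ^ 2 := by
  rw [Pfun_sub_sq]
  have h1 := Int.fract_nonneg x
  have h2 := Int.fract_lt_one x
  nlinarith

lemma Pfun_sub_le (x : ℝ) : Pfun x - x ^ 2 ≤ 1 / 4 := by
  rw [Pfun_sub_sq]
  nlinarith [sq_nonneg (Int.fract x - 1/2)]

lemma Pfun_eq_sq_iff (x : ℝ) : Pfun x = x ^ 2 ↔ ∃ m : ℤ, x = (m : ℝ) := by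
  constructor
  · intro h
    have h' : Int.fract x * (1 - Int.fract x) = 0 := by
      rw [← Pfun_sub_sq]; linarith
    have h1 := Int.fract_nonneg x
    have h2 := Int.fract_lt_one x
    have : Int.fract x = 0 := by
      rcases mul_eq_zero.1 h' with h | h
      · exact h
      · nlinarith
    exact ⟨⌊x⌋, by have h3 : Int.fract x = x - ⌊x⌋ := rfl; linarith⟩
  · rintro ⟨m, rfl⟩
    have : Int.fract (m : ℝ) = 0 := Int.fract_intCast m
    have := Pfun_sub_sq (m : ℝ)
    rw [this] at *
    nlinarith [Pfun_sub_sq (m : ℝ)]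

/-- `0 ≤ 𝒫 − 𝒬 ≤ 1/2`, with equality `𝒫 = 𝒬` exactly on `ℤ²`; consequences for
intersections of critical polygons and critical circles. -/
theorem Ham_vs_Qfun :
    (∀ x y : ℝ,
      0 ≤ Ham (x, y) - (x ^ 2 + y ^ 2) ∧
      Ham (x, y) - (x ^ 2 + y ^ 2) ≤ 1 / 2 ∧
      (Ham (x, y) = x ^ 2 + y ^ 2 ↔ (∃ m : ℤ, x = (m : ℝ)) ∧ ∃ n : ℤ, y = (n : ℝ))) ∧
    (∀ e f : ℤ,
      ({z : ℝ × ℝ | Ham z = (e : ℝ)} ∩ {z : ℝ × ℝ | Qfun z = (f : ℝ)}).Nonempty →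
        e = f) ∧
    (∀ e : ℤ,
      {z : ℝ × ℝ | Ham z = (e : ℝ)} ∩ {z : ℝ × ℝ | Qfun z = (e : ℝ)} =
        {z : ℝ × ℝ | ∃ m n : ℤ, z = ((m : ℝ), (n : ℝ)) ∧ m ^ 2 + n ^ 2 = e} ∧
      Set.ncard ({z : ℝ × ℝ | Ham z = (e : ℝ)} ∩ {z : ℝ × ℝ | Qfun z = (e : ℝ)}) =
        rfun (e : ℝ)) ∧
    ∀ e : ℤ, ∀ z : ℝ × ℝ, Ham z = (e : ℝ) → Qfun z ≤ (e : ℝ) := by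
  have hmain : ∀ x y : ℝ,
      0 ≤ Ham (x, y) - (x ^ 2 + y ^ 2) ∧
      Ham (x, y) - (x ^ 2 + y ^ 2) ≤ 1 / 2 ∧
      (Ham (x, y) = x ^ 2 + y ^ 2 ↔ (∃ m : ℤ, x = (m : ℝ)) ∧ ∃ n : ℤ, y = (n : ℝ)) := by
    intro x y
    have hx0 := Pfun_sub_nonneg x
    have hy0 := Pfun_sub_nonneg y
    have hx1 := Pfun_sub_le x
    have hy1 := Pfun_sub_le y
    have hH : Ham (x, y) = Pfun x + Pfun y := rfl
    refine ⟨by rw [hH]; linarith, by rw [hH]; linarith, ?_⟩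
    constructor
    · intro h
      rw [hH] at h
      have hxe : Pfun x = x ^ 2 := by linarith
      have hye : Pfun y = y ^ 2 := by linarith
      exact ⟨(Pfun_eq_sq_iff x).1 hxe, (Pfun_eq_sq_iff y).1 hye⟩
    · rintro ⟨hx, hy⟩
      rw [hH, (Pfun_eq_sq_iff x).2 hx, (Pfun_eq_sq_iff y).2 hy]
  have hint : ∀ e : ℤ, ∀ z : ℝ × ℝ,
      (Ham z = (e : ℝ) ∧ Qfun z = (e : ℝ)) ↔
        ∃ m n : ℤ, z = ((m : ℝ), (n : ℝ)) ∧ m ^ 2 + n ^ 2 = e := by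
    intro e z
    constructor
    · rintro ⟨h1, h2⟩
      obtain ⟨_, _, hiff⟩ := hmain z.1 z.2
      have hQ : Qfun z = z.1 ^ 2 + z.2 ^ 2 := rfl
      have : Ham (z.1, z.2) = z.1 ^ 2 + z.2 ^ 2 := by
        rw [show ((z.1, z.2) : ℝ × ℝ) = z from rfl, h1, ← h2, hQ]
      obtain ⟨⟨m, hm⟩, ⟨n, hn⟩⟩ := hiff.1 this
      refine ⟨m, n, by rw [Prod.ext_iff]; exact ⟨hm, hn⟩, ?_⟩
      have : ((m : ℝ)) ^ 2 + (n : ℝ) ^ 2 = (e : ℝ) := by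
        rw [← hm, ← hn, ← hQ, h2]
      exact_mod_cast this
    · rintro ⟨m, n, rfl, h⟩
      have hQ : Qfun ((m : ℝ), (n : ℝ)) = (m : ℝ) ^ 2 + (n : ℝ) ^ 2 := rfl
      have he : ((m : ℝ)) ^ 2 + (n : ℝ) ^ 2 = (e : ℝ) := by exact_mod_cast h
      obtain ⟨_, _, hiff⟩ := hmain (m : ℝ) (n : ℝ)
      refine ⟨?_, by rw [hQ, he]⟩
      have := hiff.2 ⟨⟨m, rfl⟩, ⟨n, rfl⟩⟩
      rw [this]; exact he
  refine ⟨hmain, ?_, ?_, ?_⟩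
  · rintro e f ⟨z, hz1, hz2⟩
    simp only [Set.mem_setOf_eq] at hz1 hz2
    obtain ⟨h0, h12, -⟩ := hmain z.1 z.2
    have hH : Ham (z.1, z.2) = Ham z := rfl
    have hQ : Qfun z = z.1 ^ 2 + z.2 ^ 2 := rfl
    rw [hH, hz1] at h0 h12
    rw [hQ] at hz2
    have h0' : (0 : ℝ) ≤ (e : ℝ) - (f : ℝ) := by linarith
    have h1' : ((e : ℝ)) - (f : ℝ) ≤ 1 / 2 := by linarith
    have h0'' : (0 : ℤ) ≤ e - f := by exact_mod_cast (by push_cast; linarith : (0:ℝ) ≤ ((e - f : ℤ) : ℝ))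
    have h1'' : (e - f : ℤ) < 1 := by exact_mod_cast (by push_cast; linarith : ((e - f : ℤ) : ℝ) < 1)
    omega
  · intro e
    have hset : {z : ℝ × ℝ | Ham z = (e : ℝ)} ∩ {z : ℝ × ℝ | Qfun z = (e : ℝ)} =
        {z : ℝ × ℝ | ∃ m n : ℤ, z = ((m : ℝ), (n : ℝ)) ∧ m ^ 2 + n ^ 2 = e} := by
      ext z
      simp only [Set.mem_inter_iff, Set.mem_setOf_eq]
      exact hint e z
    refine ⟨hset, ?_⟩
    rw [hset]
    unfold rfun
    have himg : {z : ℝ × ℝ | ∃ m n : ℤ, z = ((m : ℝ), (n : ℝ)) ∧ m ^ 2 + n ^ 2 = e} =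
        (fun p : ℤ × ℤ => ((p.1 : ℝ), (p.2 : ℝ))) ''
          {p : ℤ × ℤ | ((p.1 : ℝ)) ^ 2 + ((p.2 : ℝ)) ^ 2 = (e : ℝ)} := by
      ext z
      simp only [Set.mem_image, Set.mem_setOf_eq]
      constructor
      · rintro ⟨m, n, rfl, h⟩
        exact ⟨(m, n), by exact_mod_cast h, rfl⟩
      · rintro ⟨⟨m, n⟩, h, rfl⟩
        exact ⟨m, n, rfl, by exact_mod_cast h⟩
    rw [himg]
    apply Set.ncard_image_of_injective
    intro p q h
    simp only [Prod.ext_iff] at h ⊢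
    exact_mod_cast h
  · intro e z hz
    obtain ⟨h0, -, -⟩ := hmain z.1 z.2
    have hH : Ham (z.1, z.2) = Ham z := rfl
    have hQ : Qfun z = z.1 ^ 2 + z.2 ^ 2 := rfl
    rw [hH, hz] at h0
    rw [hQ]; linarith
end

section
/- Let e < e′ be consecutive elements of ℰ. Then for every real number a with e < a < e′, one has ⌊√a⌋ = ⌊√e⌋ and ⌊√(a/2)⌋ = ⌊√(e/2)⌋. (In particular, the first and last vertex types of the polygon class with values in (e,e′) are constant, equal to ⌊√(e/2)⌋ and ⌊√e⌋ respectively.) -/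
open scoped Classical

lemma floor_sqrt_eq_aux (k : ℕ) (x : ℝ) (h1 : ((k : ℝ)) ^ 2 ≤ x)
    (h2 : x < ((k : ℝ) + 1) ^ 2) : ⌊Real.sqrt x⌋ = (k : ℤ) := by
  have hx : 0 ≤ x := le_trans (by positivity) h1
  have hk : (k : ℝ) ≤ Real.sqrt x := (Real.le_sqrt (by positivity) hx).mpr h1
  have hk2 : Real.sqrt x < (k : ℝ) + 1 := by
    have := Real.sqrt_lt_sqrt hx h2
    rwa [Real.sqrt_sq (by positivity)] at this
  rw [Int.floor_eq_iff]
  constructor <;> push_cast <;> linarith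

/-- Between consecutive critical numbers the floors `⌊√a⌋` and `⌊√(a/2)⌋` are
constant. -/
theorem floor_sqrt_constant_between_consecutive_critical_numbers
    (e e' : ℕ) (he : e ∈ Eset) (he' : e' ∈ Eset) (hlt : e < e')
    (hcons : ∀ f ∈ Eset, ¬(e < f ∧ f < e')) :
    ∀ a : ℝ, (e : ℝ) < a → a < (e' : ℝ) →
      ⌊Real.sqrt a⌋ = ⌊Real.sqrt (e : ℝ)⌋ ∧
      ⌊Real.sqrt (a / 2)⌋ = ⌊Real.sqrt ((e : ℝ) / 2)⌋ := by
  intro a ha ha'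
  set s := Nat.sqrt e with hs
  set t := Nat.sqrt (e / 2) with ht
  -- (s+1)^2 ∈ Eset, and e < (s+1)^2, so e' ≤ (s+1)^2
  have hsq_mem : ((s + 1) ^ 2 : ℕ) ∈ Eset := ⟨s + 1, 0, by push_cast; ring⟩
  have hlt1 : e < (s + 1) ^ 2 := by
    have := Nat.lt_succ_sqrt e
    simpa [pow_two] using this
  have he'le1 : e' ≤ (s + 1) ^ 2 := by
    by_contra h
    exact hcons ((s + 1) ^ 2) hsq_mem ⟨hlt1, by omega⟩
  have hs2le : s ^ 2 ≤ e := Nat.sqrt_le' e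
  -- 2*(t+1)^2 ∈ Eset, and e < 2*(t+1)^2, so e' ≤ 2*(t+1)^2
  have h2sq_mem : (2 * (t + 1) ^ 2 : ℕ) ∈ Eset := ⟨t + 1, t + 1, by push_cast; ring⟩
  have ht1 : e / 2 < (t + 1) ^ 2 := by
    have := Nat.lt_succ_sqrt (e / 2)
    simpa [pow_two] using this
  have hlt2 : e < 2 * (t + 1) ^ 2 := by omega
  have he'le2 : e' ≤ 2 * (t + 1) ^ 2 := by
    by_contra h
    exact hcons (2 * (t + 1) ^ 2) h2sq_mem ⟨hlt2, by omega⟩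
  have ht2le : 2 * t ^ 2 ≤ e := by
    have h : t ^ 2 ≤ e / 2 := Nat.sqrt_le' (e / 2)
    omega
  have hee' : (e' : ℝ) ≤ ((s : ℝ) + 1) ^ 2 := by
    have := (Nat.cast_le (α := ℝ)).mpr he'le1
    push_cast at this; linarith
  have hee'2 : (e' : ℝ) ≤ 2 * ((t : ℝ) + 1) ^ 2 := by
    have := (Nat.cast_le (α := ℝ)).mpr he'le2
    push_cast at this; linarith
  have hse : ((s : ℝ)) ^ 2 ≤ (e : ℝ) := by
    have := (Nat.cast_le (α := ℝ)).mpr hs2le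
    push_cast at this; linarith
  have hte : 2 * ((t : ℝ)) ^ 2 ≤ (e : ℝ) := by
    have := (Nat.cast_le (α := ℝ)).mpr ht2le
    push_cast at this; linarith
  have hee : (e : ℝ) < 2 * ((t : ℝ) + 1) ^ 2 := by
    have := (Nat.cast_lt (α := ℝ)).mpr hlt2
    push_cast at this; linarith
  have hee1 : (e : ℝ) < ((s : ℝ) + 1) ^ 2 := by
    have := (Nat.cast_lt (α := ℝ)).mpr hlt1
    push_cast at this; linarith
  constructor
  · rw [floor_sqrt_eq_aux s a (by linarith) (by linarith),
      floor_sqrt_eq_aux s (e : ℝ) hse hee1]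
  · rw [floor_sqrt_eq_aux t (a / 2) (by linarith) (by linarith),
      floor_sqrt_eq_aux t ((e : ℝ) / 2) (by linarith) (by linarith)]
end

section
/- Proposition (density of integrable points): For r > 0 and 0 < λ < 1 let A(r,λ) = {z ∈ (λℤ)² : ‖z‖∞ < r} and μ₁(r,λ) = #{z ∈ A(r,λ) : 𝐯(z) = 𝐰(z)} / #A(r,λ). Then for every fixed r > 0, lim_{λ→0⁺} μ₁(r,λ) = 1. -/
open scoped Classical

private lemma floor_helper {lam c t u : ℝ} (hl : 0 < lam) (ht : |t| < c)
    (h1 : lam * c ≤ Int.fract u) (h2 : Int.fract u < 1 - lam * c) :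
    ⌊lam * t - u⌋ = -⌊u⌋ - 1 := by
  obtain ⟨ht1, ht2⟩ := abs_lt.mp ht
  have hu : u = (⌊u⌋ : ℝ) + Int.fract u := by rw [Int.fract]; ring
  have k1 : 0 < lam * (c - t) := mul_pos hl (by linarith)
  have k2 : 0 < lam * (t + c) := mul_pos hl (by linarith)
  rw [Int.floor_eq_iff]
  push_cast
  constructor <;> nlinarith

private lemma floor_helper2 {lam c t u : ℝ} (hl : 0 < lam) (ht : |t| < c)
    (h1 : lam * c ≤ Int.fract u) (h2 : Int.fract u < 1 - lam * c) :
    ⌊lam * t + u⌋ = ⌊u⌋ := by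
  obtain ⟨ht1, ht2⟩ := abs_lt.mp ht
  have hu : u = (⌊u⌋ : ℝ) + Int.fract u := by rw [Int.fract]; ring
  have k1 : 0 < lam * (c - t) := mul_pos hl (by linarith)
  have k2 : 0 < lam * (t + c) := mul_pos hl (by linarith)
  rw [Int.floor_eq_iff]
  push_cast
  constructor <;> nlinarith

private lemma claimA {lam r : ℝ} (hl : 0 < lam) {a b : ℤ}
    (hx : |lam * a| < r) (hy : |lam * b| < r)
    (ha1 : lam * (2*r+3) ≤ Int.fract (lam * a))
    (ha2 : Int.fract (lam * a) < 1 - lam * (2*r+3))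
    (hb1 : lam * (2*r+3) ≤ Int.fract (lam * b))
    (hb2 : Int.fract (lam * b) < 1 - lam * (2*r+3)) :
    vfield lam ((lam * a : ℝ), (lam * b : ℝ)) = wfield lam (lam * a, lam * b) := by
  have hr : 0 < r := lt_of_le_of_lt (abs_nonneg _) hx
  obtain ⟨hx1, hx2⟩ := abs_lt.mp hx
  obtain ⟨hy1, hy2⟩ := abs_lt.mp hy
  set m : ℤ := ⌊lam * (a:ℝ)⌋ with hm
  set n : ℤ := ⌊lam * (b:ℝ)⌋ with hn
  have hmle : (m:ℝ) ≤ lam * a := Int.floor_le _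
  have hmgt : lam * a < m + 1 := Int.lt_floor_add_one _
  have hnle : (n:ℝ) ≤ lam * b := Int.floor_le _
  have hngt : lam * b < n + 1 := Int.lt_floor_add_one _
  have f1 : ⌊lam * (m:ℝ) - lam * b⌋ = -n - 1 :=
    floor_helper hl (by rw [abs_lt]; constructor <;> linarith) hb1 hb2
  have f2 : ⌊lam * (-(n:ℝ) - 1) - lam * a⌋ = -m - 1 :=
    floor_helper hl (by rw [abs_lt]; constructor <;> linarith) ha1 ha2
  have f3 : ⌊lam * (-(2*(m:ℝ)+1)) + lam * b⌋ = n :=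
    floor_helper2 hl (by rw [abs_lt]; constructor <;> linarith) hb1 hb2
  have e1 : Fl lam ((lam * a : ℝ), (lam * b : ℝ)) = (lam * (m:ℝ) - lam * b, lam * a) := by
    show (lam * ((⌊lam * (a:ℝ)⌋ : ℤ) : ℝ) - lam * b, lam * (a:ℝ)) = _
    rw [← hm]
  have e2 : Fl lam ((lam * (m:ℝ) - lam * b : ℝ), (lam * a : ℝ))
      = (lam * (-(n:ℝ) - 1) - lam * a, lam * (m:ℝ) - lam * b) := by
    show (lam * ((⌊lam * (m:ℝ) - lam * b⌋ : ℤ) : ℝ) - lam * a, lam * (m:ℝ) - lam * b) = _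
    rw [f1]
    simp only [Prod.mk.injEq]
    refine ⟨?_, trivial⟩
    push_cast
    ring
  have e3 : Fl lam ((lam * (-(n:ℝ) - 1) - lam * a : ℝ), (lam * (m:ℝ) - lam * b : ℝ))
      = (lam * (-(2*(m:ℝ)+1)) + lam * b, lam * (-(n:ℝ) - 1) - lam * a) := by
    show (lam * ((⌊lam * (-(n:ℝ) - 1) - lam * a⌋ : ℤ) : ℝ) - (lam * (m:ℝ) - lam * b),
      lam * (-(n:ℝ) - 1) - lam * a) = _
    rw [f2]
    simp only [Prod.mk.injEq]
    refine ⟨?_, trivial⟩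
    push_cast
    ring
  have e4 : Fl lam ((lam * (-(2*(m:ℝ)+1)) + lam * b : ℝ), (lam * (-(n:ℝ) - 1) - lam * a : ℝ))
      = (lam * a + lam * (2*(n:ℝ)+1), lam * b - lam * (2*(m:ℝ)+1)) := by
    show (lam * ((⌊lam * (-(2*(m:ℝ)+1)) + lam * b⌋ : ℤ) : ℝ) - (lam * (-(n:ℝ) - 1) - lam * a),
      lam * (-(2*(m:ℝ)+1)) + lam * b) = _
    rw [f3]
    simp only [Prod.mk.injEq]
    constructor <;> (push_cast; ring)
  have E : (Fl lam)^[4] ((lam * a : ℝ), (lam * b : ℝ))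
      = (lam * a + lam * (2*(n:ℝ)+1), lam * b - lam * (2*(m:ℝ)+1)) := by
    have e0 : (Fl lam)^[4] ((lam * a : ℝ), (lam * b : ℝ))
        = Fl lam (Fl lam (Fl lam (Fl lam (lam * a, lam * b)))) := rfl
    rw [e0, e1, e2, e3, e4]
  show (Fl lam)^[4] ((lam * a : ℝ), (lam * b : ℝ)) - ((lam * a : ℝ), (lam * b : ℝ)) = _
  rw [E]
  show _ = (lam * (2 * ((⌊lam * (b:ℝ)⌋ : ℤ) : ℝ) + 1), -(lam * (2 * ((⌊lam * (a:ℝ)⌋ : ℤ) : ℝ) + 1)))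
  rw [← hm, ← hn, Prod.mk_sub_mk]
  simp only [Prod.mk.injEq]
  constructor <;> ring

private lemma bad_card {lam r : ℝ} (hl : 0 < lam) (hr : 0 < r) (hlc : lam * (2*r+3) ≤ 1) :
    ((Finset.Ioo ⌊-(r/lam)⌋ ⌈r/lam⌉).filter
      (fun a : ℤ => ¬(lam * (2*r+3) ≤ Int.fract (lam * a) ∧
        Int.fract (lam * a) < 1 - lam * (2*r+3)))).card
    ≤ (Finset.Icc (-(⌈r⌉+1)) (⌈r⌉+1)).card * (⌊(2*(2*r+3):ℝ)⌋+1).toNat := by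
  have hsub : ((Finset.Ioo ⌊-(r/lam)⌋ ⌈r/lam⌉).filter
      (fun a : ℤ => ¬(lam * (2*r+3) ≤ Int.fract (lam * a) ∧
        Int.fract (lam * a) < 1 - lam * (2*r+3))))
      ⊆ (Finset.Icc (-(⌈r⌉+1)) (⌈r⌉+1)).biUnion
        (fun k => Finset.Icc ⌈(k:ℝ)/lam - (2*r+3)⌉ ⌊(k:ℝ)/lam + (2*r+3)⌋) := by
    intro a ha
    rw [Finset.mem_filter, Finset.mem_Ioo, Int.floor_lt, Int.lt_ceil] at ha
    obtain ⟨⟨hS1, hS2⟩, hbad⟩ := ha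
    have key : lam * (r / lam) = r := by field_simp
    have hxr1 : -r < lam * a := by
      have := mul_lt_mul_of_pos_left hS1 hl
      rw [mul_neg, key] at this; linarith
    have hxr2 : lam * a < r := by
      have := mul_lt_mul_of_pos_left hS2 hl
      rw [key] at this; linarith
    push_neg at hbad
    have hfr : Int.fract (lam * (a:ℝ)) = lam * a - ⌊lam * (a:ℝ)⌋ := rfl
    have hf0 := Int.fract_nonneg (lam * (a:ℝ))
    have hf1 := Int.fract_lt_one (lam * (a:ℝ))
    obtain ⟨k, hk⟩ : ∃ k : ℤ, |lam * (a:ℝ) - k| ≤ lam * (2*r+3) := by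
      rcases lt_or_ge (Int.fract (lam * (a:ℝ))) (lam * (2*r+3)) with h | h
      · exact ⟨⌊lam * (a:ℝ)⌋, by rw [abs_le]; constructor <;> linarith⟩
      · have h2 := hbad h
        refine ⟨⌊lam * (a:ℝ)⌋ + 1, by rw [abs_le]; push_cast; constructor <;> linarith⟩
    have hk' := abs_le.mp hk
    have hkr1 : -(r+1) ≤ (k:ℝ) := by linarith [hk'.1, hk'.2]
    have hkr2 : (k:ℝ) ≤ r + 1 := by linarith [hk'.1, hk'.2]
    rw [Finset.mem_biUnion]
    refine ⟨k, ?_, ?_⟩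
    · rw [Finset.mem_Icc]
      have hc := Int.le_ceil r
      constructor
      · have : (-(⌈r⌉+1) : ℝ) ≤ (k:ℝ) := by push_cast; linarith
        exact_mod_cast this
      · have : (k:ℝ) ≤ ((⌈r⌉+1 : ℤ) : ℝ) := by push_cast; linarith
        exact_mod_cast this
    · rw [Finset.mem_Icc, Int.ceil_le, Int.le_floor]
      constructor
      · rw [sub_le_iff_le_add, div_le_iff₀ hl]
        nlinarith [hk'.2]
      · rw [← sub_le_iff_le_add, le_div_iff₀ hl]
        nlinarith [hk'.1]
  refine le_trans (Finset.card_le_card hsub) ?_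
  refine le_trans (Finset.card_biUnion_le) ?_
  have : ∀ k ∈ Finset.Icc (-(⌈r⌉+1)) (⌈r⌉+1),
      (Finset.Icc ⌈(k:ℝ)/lam - (2*r+3)⌉ ⌊(k:ℝ)/lam + (2*r+3)⌋).card
        ≤ (⌊(2*(2*r+3):ℝ)⌋+1).toNat := by
    intro k _
    rw [Int.card_Icc]
    have h1 := Int.floor_le ((k:ℝ)/lam + (2*r+3))
    have h2 := Int.le_ceil ((k:ℝ)/lam - (2*r+3))
    have h4 : ⌊(k:ℝ)/lam + (2*r+3)⌋ - ⌈(k:ℝ)/lam - (2*r+3)⌉ ≤ ⌊(2*(2*r+3):ℝ)⌋ :=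
      Int.le_floor.mpr (by push_cast; linarith)
    omega
  calc (Finset.Icc (-(⌈r⌉+1)) (⌈r⌉+1)).sum
        (fun k => (Finset.Icc ⌈(k:ℝ)/lam - (2*r+3)⌉ ⌊(k:ℝ)/lam + (2*r+3)⌋).card)
      ≤ (Finset.Icc (-(⌈r⌉+1)) (⌈r⌉+1)).card • ((⌊(2*(2*r+3):ℝ)⌋+1).toNat) :=
        Finset.sum_le_card_nsmul _ _ _ this
    _ = _ := by rw [smul_eq_mul]

private lemma arith_final {N G C nm eps : ℝ} (heps : 0 < eps) (heps1 : eps ≤ 1)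
    (hN0 : 0 < N) (hC0 : 0 ≤ C) (hGlb : N - C ≤ G) (hGle : G ≤ N)
    (h1 : nm ≤ N * N) (h2 : G * G ≤ nm) (hεN : 2*(C+1) < eps * N) :
    |nm / (N * N) - 1| < eps := by
  have hNN : (0:ℝ) < N * N := mul_pos hN0 hN0
  have hNC : C + 2 ≤ N := by nlinarith
  rw [abs_lt]
  constructor
  · have d2 : (N - C) * (N - C) ≤ nm := by nlinarith
    have d3 : 1 - eps < nm / (N * N) := by
      rw [lt_div_iff₀ hNN]
      nlinarith [mul_lt_mul_of_pos_right hεN hN0]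
    linarith
  · have h6 : nm / (N * N) ≤ 1 := by rw [div_le_one hNN]; exact h1
    linarith

/-- **Proposition** (density of integrable points): `μ₁(r,λ) → 1` as `λ → 0⁺`. -/
theorem density_of_integrable_points :
    ∀ r : ℝ, 0 < r →
      Filter.Tendsto
        (fun lam : ℝ =>
          (Set.ncard {z ∈ Aset r lam | vfield lam z = wfield lam z} : ℝ) /
            (Set.ncard (Aset r lam) : ℝ))
        (nhdsWithin 0 (Set.Ioi 0)) (nhds 1) := by
  intro r hr
  rw [Metric.tendsto_nhds]
  intro ε hε
  set ε' : ℝ := min ε 1 with hε'def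
  have hε' : 0 < ε' := lt_min hε one_pos
  have hε'1 : ε' ≤ 1 := min_le_right _ _
  set Cb : ℕ := (Finset.Icc (-(⌈r⌉+1)) (⌈r⌉+1)).card * (⌊(2*(2*r+3):ℝ)⌋+1).toNat with hCbdef
  set Q : ℝ := 2*((Cb:ℝ)+1)/ε' + 1 with hQdef
  have hQpos : 0 < Q := by positivity
  set δ : ℝ := min (2*r/Q) (1/(2*r+3)) with hδdef
  have hδpos : 0 < δ := lt_min (by positivity) (by positivity)
  have hmem : Set.Ioo (0:ℝ) δ ∈ nhdsWithin 0 (Set.Ioi 0) :=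
    Ioo_mem_nhdsGT_of_mem ⟨le_refl 0, hδpos⟩
  filter_upwards [hmem] with lam hlam
  obtain ⟨hl, hld⟩ := hlam
  have hlne : lam ≠ 0 := ne_of_gt hl
  have hlc1 : lam * (2*r+3) ≤ 1 := by
    have h := lt_of_lt_of_le hld (min_le_right _ _)
    rw [lt_div_iff₀ (by positivity : (0:ℝ) < 2*r+3)] at h
    linarith
  set S : Finset ℤ := Finset.Ioo ⌊-(r/lam)⌋ ⌈r/lam⌉ with hSdef
  have memS : ∀ a : ℤ, a ∈ S ↔ |lam * a| < r := by
    intro a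
    rw [hSdef, Finset.mem_Ioo, Int.floor_lt, Int.lt_ceil, abs_lt]
    have key : lam * (r / lam) = r := by field_simp
    constructor
    · rintro ⟨h1, h2⟩
      have g1 := mul_lt_mul_of_pos_left h1 hl
      have g2 := mul_lt_mul_of_pos_left h2 hl
      rw [mul_neg, key] at g1
      rw [key] at g2
      exact ⟨by linarith, g2⟩
    · rintro ⟨h1, h2⟩
      constructor
      · have h3 : lam * (-(r/lam)) < lam * (a:ℝ) := by rw [mul_neg, key]; linarith
        exact lt_of_mul_lt_mul_left h3 (le_of_lt hl)
      · have h3 : lam * (a:ℝ) < lam * (r/lam) := by rw [key]; linarith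
        exact lt_of_mul_lt_mul_left h3 (le_of_lt hl)
  set Gd : Finset ℤ := S.filter (fun a => lam * (2*r+3) ≤ Int.fract (lam * a) ∧
    Int.fract (lam * a) < 1 - lam * (2*r+3)) with hGddef
  -- card split
  have hsplit : Gd.card + (S.filter (fun a : ℤ => ¬(lam * (2*r+3) ≤ Int.fract (lam * a) ∧
      Int.fract (lam * a) < 1 - lam * (2*r+3)))).card = S.card := by
    rw [hGddef]
    exact Finset.card_filter_add_card_filter_not _
  have hbad := bad_card (r := r) hl hr hlc1
  have hGlb : (S.card : ℝ) - Cb ≤ Gd.card := by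
    have h1 : (Gd.card : ℝ) + (S.filter (fun a : ℤ => ¬(lam * (2*r+3) ≤ Int.fract (lam * a) ∧
        Int.fract (lam * a) < 1 - lam * (2*r+3)))).card = S.card := by exact_mod_cast hsplit
    have h2 : ((S.filter (fun a : ℤ => ¬(lam * (2*r+3) ≤ Int.fract (lam * a) ∧
        Int.fract (lam * a) < 1 - lam * (2*r+3)))).card : ℝ) ≤ Cb := by exact_mod_cast hbad
    linarith
  have hGle : (Gd.card : ℝ) ≤ S.card := by
    exact_mod_cast Finset.card_le_card (Finset.filter_subset _ _)
  -- size of S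
  have hNlb : 2*(r/lam) - 1 ≤ (S.card : ℝ) := by
    rw [hSdef, Int.card_Ioo]
    have h1 := Int.le_ceil (r/lam)
    have h2 := Int.floor_le (-(r/lam))
    have h3 : (⌈r/lam⌉ - ⌊-(r/lam)⌋ - 1 : ℤ) ≤ ((⌈r/lam⌉ - ⌊-(r/lam)⌋ - 1).toNat : ℤ) :=
      Int.self_le_toNat _
    have h4 : ((⌈r/lam⌉ - ⌊-(r/lam)⌋ - 1 : ℤ) : ℝ) ≤ (((⌈r/lam⌉ - ⌊-(r/lam)⌋ - 1).toNat : ℤ) : ℝ) := by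
      exact_mod_cast h3
    push_cast at h4 ⊢
    linarith
  have hNbig : 2*((Cb:ℝ)+1)/ε' < S.card := by
    have h := lt_of_lt_of_le hld (min_le_left _ _)
    rw [lt_div_iff₀ hQpos] at h
    have h2 : Q < 2*(r/lam) := by
      rw [show 2*(r/lam) = 2*r/lam by ring, lt_div_iff₀ hl]
      linarith
    rw [hQdef] at h2
    linarith
  have hN0 : (0:ℝ) < S.card := by
    have hC0' : (0:ℝ) ≤ (Cb:ℝ) := Nat.cast_nonneg _
    have : (0:ℝ) < 2*((Cb:ℝ)+1)/ε' := div_pos (by linarith) hε'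
    linarith
  -- the bijection
  have hinj : Function.Injective (fun p : ℤ × ℤ => ((lam * p.1 : ℝ), (lam * p.2 : ℝ))) := by
    intro p q hpq
    rw [Prod.mk.injEq] at hpq
    obtain ⟨h1, h2⟩ := hpq
    have e1 : (p.1 : ℝ) = q.1 := mul_left_cancel₀ hlne h1
    have e2 : (p.2 : ℝ) = q.2 := mul_left_cancel₀ hlne h2
    exact Prod.ext (by exact_mod_cast e1) (by exact_mod_cast e2)
  have hAeq : Aset r lam = (fun p : ℤ × ℤ => ((lam * p.1 : ℝ), (lam * p.2 : ℝ))) ''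
      ((S ×ˢ S : Finset (ℤ × ℤ)) : Set (ℤ × ℤ)) := by
    ext z
    constructor
    · rintro ⟨⟨a, b, rfl⟩, hmax⟩
      rw [max_lt_iff] at hmax
      refine ⟨(a, b), ?_, rfl⟩
      rw [Finset.mem_coe, Finset.mem_product]
      exact ⟨(memS a).mpr hmax.1, (memS b).mpr hmax.2⟩
    · rintro ⟨⟨a, b⟩, hp, rfl⟩
      rw [Finset.mem_coe, Finset.mem_product] at hp
      refine ⟨⟨a, b, rfl⟩, ?_⟩
      rw [max_lt_iff]
      exact ⟨(memS a).mp hp.1, (memS b).mp hp.2⟩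
  have hAfin : (Aset r lam).Finite := by
    rw [hAeq]; exact Set.Finite.image _ (Finset.finite_toSet _)
  have hAcard : (Aset r lam).ncard = S.card * S.card := by
    rw [hAeq, Set.ncard_image_of_injective _ hinj, Set.ncard_coe_finset, Finset.card_product]
  -- numerator bounds
  have hsub2 : (fun p : ℤ × ℤ => ((lam * p.1 : ℝ), (lam * p.2 : ℝ))) ''
      ((Gd ×ˢ Gd : Finset (ℤ × ℤ)) : Set (ℤ × ℤ))
      ⊆ {z ∈ Aset r lam | vfield lam z = wfield lam z} := by
    rintro z ⟨⟨a, b⟩, hp, rfl⟩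
    rw [Finset.mem_coe, Finset.mem_product, hGddef, Finset.mem_filter, Finset.mem_filter] at hp
    obtain ⟨⟨haS, ha1, ha2⟩, hbS, hb1, hb2⟩ := hp
    have hxa := (memS a).mp haS
    have hxb := (memS b).mp hbS
    exact ⟨⟨⟨a, b, rfl⟩, max_lt_iff.mpr ⟨hxa, hxb⟩⟩, claimA hl hxa hxb ha1 ha2 hb1 hb2⟩
  have hnum_ge : Gd.card * Gd.card ≤ ({z ∈ Aset r lam | vfield lam z = wfield lam z}).ncard := by
    calc Gd.card * Gd.card
        = ((fun p : ℤ × ℤ => ((lam * p.1 : ℝ), (lam * p.2 : ℝ))) ''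
            ((Gd ×ˢ Gd : Finset (ℤ × ℤ)) : Set (ℤ × ℤ))).ncard := by
          rw [Set.ncard_image_of_injective _ hinj, Set.ncard_coe_finset, Finset.card_product]
      _ ≤ _ := Set.ncard_le_ncard hsub2 (hAfin.subset (Set.sep_subset _ _))
  have hnum_le : ({z ∈ Aset r lam | vfield lam z = wfield lam z}).ncard ≤ S.card * S.card := by
    rw [← hAcard]
    exact Set.ncard_le_ncard (Set.sep_subset _ _) hAfin
  -- final arithmetic
  rw [hAcard]
  have hC0 : (0:ℝ) ≤ (Cb:ℝ) := Nat.cast_nonneg _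
  have l1 : (({z ∈ Aset r lam | vfield lam z = wfield lam z}).ncard : ℝ)
      ≤ (S.card : ℝ) * (S.card : ℝ) := by exact_mod_cast hnum_le
  have l2 : (Gd.card : ℝ) * (Gd.card : ℝ)
      ≤ (({z ∈ Aset r lam | vfield lam z = wfield lam z}).ncard : ℝ) := by
    exact_mod_cast hnum_ge
  have hεN : 2*((Cb:ℝ)+1) < ε' * (S.card : ℝ) := by
    rw [div_lt_iff₀ hε'] at hNbig
    linarith
  rw [Nat.cast_mul, Real.dist_eq]
  exact lt_of_lt_of_le
    (arith_final hε' hε'1 hN0 hC0 hGlb hGle l1 l2 hεN)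
    (by rw [hε'def]; exact min_le_left ε 1)
end

section
/- Lemma (deviations occur only at transition points): For every r > 0 there exists λ* > 0 such that for all 0 < λ < λ* and every z ∈ A(r,λ): if 𝐯(z) ≠ 𝐰(z), then z ∈ Λ or z = (0,0). -/
open scoped Classical

private lemma cncl_le {lam : ℝ} (hl : 0 < lam) {c d : ℤ} (h : lam * (c:ℝ) ≤ lam * (d:ℝ)) :
    c ≤ d := by
  have h2 : (c:ℝ) ≤ d := le_of_mul_le_mul_left h hl
  exact_mod_cast h2

private lemma cncl_lt {lam : ℝ} (hl : 0 < lam) {c d : ℤ} (h : lam * (c:ℝ) < lam * (d:ℝ)) :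
    c < d := by
  have h2 : (c:ℝ) < d := lt_of_mul_lt_mul_left h hl.le
  exact_mod_cast h2

private lemma mulc_le {lam : ℝ} (hl : 0 < lam) {c d : ℤ} (h : c ≤ d) :
    lam * (c:ℝ) ≤ lam * (d:ℝ) :=
  mul_le_mul_of_nonneg_left (by exact_mod_cast h) hl.le

set_option maxHeartbeats 2000000 in
/-- **Lemma** (deviations occur only at transition points). -/
theorem deviations_only_at_transition_points :
    ∀ r : ℝ, 0 < r → ∃ lamstar > (0 : ℝ), ∀ lam : ℝ, 0 < lam → lam < lamstar →
      ∀ z ∈ Aset r lam, vfield lam z ≠ wfield lam z →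
        z ∈ TransSet lam ∨ z = ((0 : ℝ), (0 : ℝ)) := by
  intro r hr
  refine ⟨1 / (2 * r + 5), by positivity, ?_⟩
  intro lam hl hls z hz hv
  obtain ⟨x, y⟩ := z
  obtain ⟨⟨a, b, hab⟩, hbd0⟩ := hz
  by_contra hcon
  push_neg at hcon
  obtain ⟨hnt, hnz⟩ := hcon
  rw [lt_div_iff₀ (by positivity : (0:ℝ) < 2 * r + 5)] at hls
  have hbd : max |x| |y| < r := hbd0
  obtain ⟨hx1, hx2⟩ := abs_lt.mp ((le_max_left |x| |y|).trans_lt hbd)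
  obtain ⟨hy1, hy2⟩ := abs_lt.mp ((le_max_right |x| |y|).trans_lt hbd)
  simp only [Prod.mk.injEq] at hab
  obtain ⟨hxa, hyb⟩ := hab
  set m := ⌊x⌋ with hm
  set n := ⌊y⌋ with hn
  set F1 := ⌊lam * (m:ℝ) - y⌋ with hF1d
  set F2 := ⌊lam * (F1:ℝ) - x⌋ with hF2d
  have hmx : (m:ℝ) ≤ x := Int.floor_le x
  have hmx1 : x < m + 1 := Int.lt_floor_add_one x
  have hny : (n:ℝ) ≤ y := Int.floor_le y
  have hny1 : y < n + 1 := Int.lt_floor_add_one y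
  have hA1 : (F1:ℝ) ≤ lam * m - y := Int.floor_le _
  have hA2 : lam * m - y < F1 + 1 := Int.lt_floor_add_one _
  have hB1 : (F2:ℝ) ≤ lam * F1 - x := Int.floor_le _
  have hB2 : lam * F1 - x < F2 + 1 := Int.lt_floor_add_one _
  -- product bounds
  have pm1 : lam * (m:ℝ) < 1/2 := by
    nlinarith [mul_lt_mul_of_pos_left (show (m:ℝ) < r from lt_of_le_of_lt hmx hx2) hl]
  have pm2 : -(1/2) < lam * (m:ℝ) := by
    nlinarith [mul_lt_mul_of_pos_left (show -(r+1) < (m:ℝ) by linarith) hl]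
  have pn1 : lam * (n:ℝ) < 1/2 := by
    nlinarith [mul_lt_mul_of_pos_left (show (n:ℝ) < r from lt_of_le_of_lt hny hy2) hl]
  have pn2 : -(1/2) < lam * (n:ℝ) := by
    nlinarith [mul_lt_mul_of_pos_left (show -(r+1) < (n:ℝ) by linarith) hl]
  -- F1 ∈ [-n-2, -n]
  have hF1hi : F1 ≤ -n := by
    have h : (⌊lam * (m:ℝ) - y⌋ : ℤ) < -n + 1 :=
      Int.floor_lt.mpr (by push_cast; linarith)
    rw [← hF1d] at h; omega
  have hF1lo : -n - 2 ≤ F1 := by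
    have h : (-n - 2 : ℤ) ≤ ⌊lam * (m:ℝ) - y⌋ :=
      Int.le_floor.mpr (by push_cast; linarith)
    rw [← hF1d] at h; exact h
  -- bounds on lam * F1
  have pF1a : lam * (F1:ℝ) < 1 := by
    have h1 : (F1:ℝ) ≤ -(n:ℝ) := by exact_mod_cast hF1hi
    nlinarith [mul_lt_mul_of_pos_left (show (F1:ℝ) < r + 1 by linarith) hl]
  have pF1b : -1 < lam * (F1:ℝ) := by
    have h1 : -(n:ℝ) - 2 ≤ (F1:ℝ) := by exact_mod_cast hF1lo
    nlinarith [mul_lt_mul_of_pos_left (show -(r+2) < (F1:ℝ) by linarith) hl]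
  -- F2 ∈ [-m-2, -m]
  have hF2hi : F2 ≤ -m := by
    have h : (⌊lam * (F1:ℝ) - x⌋ : ℤ) < -m + 1 :=
      Int.floor_lt.mpr (by push_cast; linarith)
    rw [← hF2d] at h; omega
  have hF2lo : -m - 2 ≤ F2 := by
    have h : (-m - 2 : ℤ) ≤ ⌊lam * (F1:ℝ) - x⌋ :=
      Int.le_floor.mpr (by push_cast; linarith)
    rw [← hF2d] at h; exact h
  -- the 4th iterate
  have h4 : (Fl lam)^[4] (x, y) =
      (lam * ((⌊lam * (F2:ℝ) - (lam * (m:ℝ) - y)⌋ : ℤ) : ℝ) - (lam * (F1:ℝ) - x),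
        lam * (F2:ℝ) - (lam * (m:ℝ) - y)) := rfl
  -- no transition
  have hR : Rfl ((Fl lam)^[4] (x, y)) = Rfl (x, y) := by
    by_contra h
    exact hnt ⟨⟨a, b, by rw [hxa, hyb]⟩, h⟩
  rw [h4] at hR
  simp only [Rfl, Prod.mk.injEq] at hR
  obtain ⟨hD, hC⟩ := hR
  rw [← hn] at hC
  rw [hC, ← hm] at hD
  have hD1 : (m:ℝ) ≤ lam * (n:ℝ) - (lam * (F1:ℝ) - x) := by
    rw [← hD]; exact Int.floor_le _
  have hD2 : lam * (n:ℝ) - (lam * (F1:ℝ) - x) < m + 1 := by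
    rw [← hD]; exact Int.lt_floor_add_one _
  have hC1 : (n:ℝ) ≤ lam * (F2:ℝ) - (lam * (m:ℝ) - y) := by
    rw [← hC]; exact Int.floor_le _
  have hC2 : lam * (F2:ℝ) - (lam * (m:ℝ) - y) < n + 1 := by
    rw [← hC]; exact Int.lt_floor_add_one _
  -- main step 1: F1 = -n - 1
  have hF1v : F1 = -n - 1 := by
    rcases (by omega : F1 = -n ∨ F1 = -n - 1 ∨ F1 = -n - 2) with h1 | h1 | h1
    · exfalso
      rw [h1] at hA1 hA2 hB1 hB2 hD1 hD2
      push_cast at hA1 hA2 hB1 hB2 hD1 hD2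
      rcases eq_or_lt_of_le hny with hyeq | hylt
      · -- y = n
        have hm0 : (0:ℤ) ≤ m :=
          cncl_le hl (by push_cast; linarith)
        have hmF2 : m ≤ F2 :=
          cncl_le hl (by linarith)
        have hm00 : m = 0 ∧ F2 = 0 := by omega
        obtain ⟨hme, hF2e⟩ := hm00
        rw [hF2e] at hB1
        rw [hme] at hD1 hmx
        push_cast at hB1 hD1 hmx
        -- hB1 : 0 ≤ lam * (-n) - x ; hD1 : 0 ≤ lam*n - (lam*(-n) - x)
        have hn0a : n ≤ 0 := cncl_le hl (by push_cast; linarith)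
        have hn0b : (0:ℤ) ≤ n := cncl_le hl (by push_cast; linarith)
        have hne : n = 0 := by omega
        rw [hne] at hB1
        push_cast at hB1
        have hx0 : x = 0 := by linarith
        have hy0 : y = 0 := by
          rw [hne] at hyeq; push_cast at hyeq; linarith
        exact hnz (by rw [hx0, hy0])
      · -- y > n
        have hm1' : (1:ℤ) ≤ m := by
          have := cncl_lt hl (show lam * ((0:ℤ):ℝ) < lam * (m:ℝ) by push_cast; linarith)
          omega
        have hlf2 : lam * (F2:ℝ) ≤ lam * ((-1:ℤ):ℝ) := mulc_le hl (by omega)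
        push_cast at hlf2
        linarith
    · exact h1
    · exfalso
      rw [h1] at hA1 hA2 hB1 hB2 hD1 hD2
      push_cast at hA1 hA2 hB1 hB2 hD1 hD2
      -- hA2 : lam*m - y < -n - 2 + 1  ⇒ y > lam*m + n + 1 ⇒ lam*m < 0 ⇒ m ≤ -1
      have hmneg : m ≤ -1 := by
        have := cncl_lt hl (show lam * (m:ℝ) < lam * ((0:ℤ):ℝ) by push_cast; linarith)
        omega
      rcases le_or_gt 0 F2 with hf2 | hf2
      · have : (0:ℝ) ≤ lam * (F2:ℝ) := by
          have := mulc_le hl (show (0:ℤ) ≤ F2 from hf2)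
          push_cast at this; linarith
        linarith
      · have hmf : m = -1 ∧ F2 = -1 := by omega
        obtain ⟨hme, hF2e⟩ := hmf
        rw [hme] at hD1 hD2 hmx1
        rw [hF2e] at hB1 hB2
        push_cast at hB1 hB2 hD1 hD2 hmx1
        -- lattice: x = lam * a with x < 0 forces x ≤ -lam
        have hxneg : x < 0 := by linarith
        have ha1 : a ≤ -1 := by
          by_contra hcc
          push_neg at hcc
          have : (0:ℝ) ≤ (a:ℝ) := by exact_mod_cast (by omega : (0:ℤ) ≤ a)
          nlinarith [mul_nonneg hl.le this]
        have hxlam : x ≤ -lam := by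
          have := mulc_le hl (show a ≤ (-1:ℤ) from ha1)
          push_cast at this
          rw [hxa]; linarith
        -- hB2 : lam*(-n-2) - x < -1 + 1 ⇒ x > -lam*(n+2); with x ≤ -lam ⇒ n ≥ 0
        have hn0 : (0:ℤ) ≤ n := by
          have := cncl_lt hl
            (show lam * ((1:ℤ):ℝ) < lam * ((n+2:ℤ):ℝ) by push_cast; nlinarith)
          omega
        -- hD2 : lam*n - (lam*(-n-2) - x) < -1 + 1 ⇒ x < -lam*(2n+2)
        have hnneg : n < 0 := by
          have := cncl_lt hl
            (show lam * ((2*n+2:ℤ):ℝ) < lam * ((n+2:ℤ):ℝ) by push_cast; nlinarith)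
          omega
        omega
  -- main step 2: F2 = -m - 1
  have hF2v : F2 = -m - 1 := by
    rw [hF1v] at hB1 hB2 hD1 hD2
    push_cast at hB1 hB2 hD1 hD2
    rcases (by omega : F2 = -m ∨ F2 = -m - 1 ∨ F2 = -m - 2) with h2 | h2 | h2
    · exfalso
      rw [h2] at hB1
      push_cast at hB1
      -- hB1 : -m ≤ lam*(-n-1) - x ;  hD1 : m ≤ lam*n - (lam*(-n-1) - x)
      have hna : n + 1 ≤ 0 := by
        have := cncl_le hl
          (show lam * ((n+1:ℤ):ℝ) ≤ lam * ((0:ℤ):ℝ) by push_cast; linarith)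
        omega
      have hnb : n + 1 ≤ 2*n + 1 := by
        have := cncl_le hl
          (show lam * ((n+1:ℤ):ℝ) ≤ lam * ((2*n+1:ℤ):ℝ) by push_cast; linarith)
        omega
      omega
    · exact h2
    · exfalso
      rw [h2] at hB2
      push_cast at hB2
      -- hB2 : lam*(-n-1) - x < -m-2+1 ⇒ x > m+1 - lam*(n+1); x < m+1 ⇒ 0 < lam*(n+1)
      have hna : 0 < n + 1 := by
        have := cncl_lt hl
          (show lam * ((0:ℤ):ℝ) < lam * ((n+1:ℤ):ℝ) by push_cast; linarith)
        omega
      have hnb : 2*n + 1 < n + 1 := by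
        have := cncl_lt hl
          (show lam * ((2*n+1:ℤ):ℝ) < lam * ((n+1:ℤ):ℝ) by push_cast; linarith)
        omega
      omega
  -- conclude vfield = wfield
  refine hv ?_
  show (Fl lam)^[4] (x, y) - (x, y) =
    (lam * (2 * ((⌊y⌋:ℤ):ℝ) + 1), -(lam * (2 * ((⌊x⌋:ℤ):ℝ) + 1)))
  rw [h4, ← hm, ← hn, hC, hF1v, hF2v, Prod.mk_sub_mk, Prod.mk.injEq]
  constructor <;> push_cast <;> ring
end
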